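/- (One-step β-extension.) Let ⟨T, f⟩ ∈ S^κ_X, let β ≤ η_T, and let ν < κ. Then there exists a condition ⟨T', f'⟩ ≤ ⟨T, f⟩ in S^κ_X with η_{T'} = η_T + 1 and ν_{T'} ≥ ν such that: (1) supp(f(β), f(η_T)) ⊆ supp(f(η_T), f'(η_{T'})), and (2) supp(f(β), f'(η_{T'})) = θ. -/

import Mathlib

noncomputable section

open Ordinal Set

/-- A node of a streamlined tree over `κ` is a function `s : α → κ` for an ordinal `α`;
we code it by its graph, a set of pairs `(ε, v)`. -/
abbrev PNode : Type 1 := Set (Ordinal × Ordinal)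

/-- The set of ordinals in the domain of a coded node. -/
def ndom (s : PNode) : Set Ordinal := {ε | ∃ v, (ε, v) ∈ s}

/-- `s` codes a function from (the ordinals below) `α` to (the ordinals below) `ν`. -/
def IsNodeOf (ν α : Ordinal) (s : PNode) : Prop :=
  (∀ p ∈ s, p.1 < α ∧ p.2 < ν) ∧ ∀ ε, ε < α → ∃! v : Ordinal, (ε, v) ∈ s

/-- The restriction `s ↾ α` of a node. -/
def nrestrict (s : PNode) (α : Ordinal) : PNode := {p ∈ s | p.1 < α}

/-- The node `s * t`, with domain `dom t`, agreeing with `s` on `dom s` and with `t` elsewhere. -/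
def nstar (s t : PNode) : PNode :=
  {p ∈ s | p.1 ∈ ndom t} ∪ {p ∈ t | p.1 ∉ ndom s}

/-- The `α`-th level of a tree. -/
def level (T : Set PNode) (α : Ordinal) : Set PNode := {t ∈ T | ndom t = Set.Iio α}

/-- A streamlined tree: closed under restrictions. -/
def IsStreamlined (T : Set PNode) : Prop := ∀ t ∈ T, ∀ α : Ordinal, nrestrict t α ∈ T

/-- Uniform homogeneity. -/
def UnifHomog (T : Set PNode) : Prop := ∀ s ∈ T, ∀ t ∈ T, nstar s t ∈ T

/-- Normality for a tree of height `h`. -/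
def IsNormalOfHeight (T : Set PNode) (h : Ordinal) : Prop :=
  ∀ x ∈ T, ∀ α, α < h → ∃ y ∈ level T α, x ⊆ y ∨ y ⊆ x

/-- Two nodes are mutually exclusive iff they disagree everywhere on their common domain. -/
def MutExc (s t : PNode) : Prop :=
  ∀ ε v w : Ordinal, (ε, v) ∈ s → (ε, w) ∈ t → v ≠ w

/-- `s =* t` : same domain and agreement on a final segment of the domain. -/
def EqStar (s t : PNode) : Prop :=
  ndom s = ndom t ∧ ∃ α ∈ ndom s, ∀ β, α ≤ β → ∀ v : Ordinal, ((β, v) ∈ s ↔ (β, v) ∈ t)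

/-- `Δ(s,t)`: the least element of `{dom s, dom t} ∪ {δ ∈ dom s ∩ dom t ∣ s(δ) ≠ t(δ)}`. -/
def nDelta (s t : PNode) : Ordinal :=
  sInf ({δ | δ ∉ ndom s} ∪ {δ | δ ∉ ndom t} ∪
    {δ | ∃ v w : Ordinal, (δ, v) ∈ s ∧ (δ, w) ∈ t ∧ v ≠ w})

/-- `supp(f,g)` for two `θ`-sequences of nodes. -/
def supp (θo : Ordinal) (f g : Ordinal → PNode) : Set Ordinal :=
  {τ | τ < θo ∧ (f τ ⊆ g τ ∨ g τ ⊆ f τ)}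

/-- An `α`-branch of `T`. -/
def IsBranch (T : Set PNode) (α : Ordinal) (B : Set PNode) : Prop :=
  B ⊆ T ∧ (∀ x ∈ B, ∀ y ∈ B, x ⊆ y ∨ y ⊆ x) ∧
    {β : Ordinal | ∃ x ∈ B, ndom x = Set.Iio β} = Set.Iio α

/-- The set `V(T)` of vanishing levels of `T`. -/
def VSet (T : Set PNode) : Set Ordinal :=
  {α | Order.IsSuccLimit α ∧ ∀ x ∈ T, (∃ β, β < α ∧ ndom x = Set.Iio β) →
    ∃ B, IsBranch T α B ∧ x ∈ B ∧ ⋃₀ B ∉ T}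

/-- A closed set of ordinals. -/
def OrdClosed (A : Set Ordinal) : Prop :=
  ∀ α : Ordinal, Order.IsSuccLimit α → (∀ β, β < α → (A ∩ Set.Ioo β α).Nonempty) → α ∈ A

/-- A mutually exclusive `F`-ascent path (`F` given via the membership predicate `InF`)
through a tree `T` of height `γ`. -/
def MEAscentPath (θo : Ordinal) (InF : Set Ordinal → Prop) (T : Set PNode) (γ : Ordinal)
    (f : Ordinal → Ordinal → PNode) : Prop :=
  (∀ α, α < γ → ∀ τ, τ < θo → f α τ ∈ level T α) ∧
  (∀ α β, α < β → β < γ → InF (supp θo (f α) (f β))) ∧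
  (∀ α, 0 < α → α < γ → ∀ τ τ', τ < θo → τ' < θo → τ ≠ τ' → MutExc (f α τ) (f α τ'))

/-- A condition: a pair `⟨T, f⟩` together with the ordinal `η` such that `T` has height `η + 1`. -/
structure SCond : Type 1 where
  T : Set PNode
  f : Ordinal.{0} → Ordinal.{0} → PNode
  η : Ordinal.{0}

/-- Membership in the filter generated by the decreasing sequence `X` of length `ζ`. -/
def InFX (ζ : Ordinal) (X : Ordinal → Set Ordinal) (Y : Set Ordinal) : Prop :=
  ∃ ξ, ξ < ζ ∧ X ξ ⊆ Y

/-- `p` is a condition of the forcing `𝕊^κ_𝐗`. -/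
def IsSCondX (κ : Cardinal) (θo : Ordinal) (InF : Set Ordinal → Prop) (p : SCond) : Prop :=
  (∀ t ∈ p.T, ∃ α, α ≤ p.η ∧ IsNodeOf κ.ord α t) ∧
  IsStreamlined p.T ∧
  UnifHomog p.T ∧
  IsNormalOfHeight p.T (p.η + 1) ∧
  (∀ α, α ≤ p.η → (level p.T α).Nonempty) ∧
  (∀ α, α ≤ p.η → Cardinal.mk ↥(level p.T α) < Cardinal.lift.{1} κ) ∧
  MEAscentPath θo InF p.T (p.η + 1) p.f ∧
  OrdClosed (VSet p.T) ∧
  (Order.IsSuccLimit p.η → p.η ∈ VSet p.T) ∧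
  (∀ α, 0 < α → α ≤ p.η → ∀ t ∈ level p.T α, InF {τ | τ < θo ∧ MutExc t (p.f α τ)})

/-- `p ≤ q` in `𝕊^κ_𝐗` (and in `𝕊^κ_θ`): `p` end-extends `q` in both coordinates. -/
def sext (θo : Ordinal) (p q : SCond) : Prop :=
  q.η ≤ p.η ∧
  (∀ t : PNode, t ∈ q.T ↔ (t ∈ p.T ∧ ∃ α, α ≤ q.η ∧ ndom t = Set.Iio α)) ∧
  (∀ α, α ≤ q.η → ∀ τ, τ < θo → p.f α τ = q.f α τ)

/-- Even ordinals (limit ordinals are even). -/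
def EvenOrd (β : Ordinal) : Prop := ∃ γ : Ordinal, β = 2 * γ

/-- Player II has a winning strategy in the game `⅁_μ(P)`: she can choose conditions at all
even (incl. limit) stages `< μ`, only as a function of the previous moves, so that as long as
player I plays legally at odd stages, the resulting `μ`-sequence is decreasing. -/
def WinningStratII {P : Type*} (le : P → P → Prop) (μ : Ordinal) : Prop :=
  ∃ σ : (β : Ordinal) → ({γ : Ordinal // γ < β} → P) → P,
    ∀ g : Ordinal → P,
      (∀ β, β < μ →
        (EvenOrd β → g β = σ β (fun γ => g γ.1)) ∧
        (¬ EvenOrd β → ∀ γ, γ < β → le (g β) (g γ))) →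
      ∀ γ β, γ < β → β < μ → le (g β) (g γ)

/-!
The new level `η + 1` consists of the nodes `t⌢⟨i⟩` with `t` on the top level of `T` and
`i < μ := max ν θ`; it has fewer than `κ` nodes, `ν` of them pairwise `=*`-inequivalent. The path
is prolonged by `f'(τ) := (f(β)(τ) * f(η)(τ))⌢⟨τ⟩`, which lies in the tree by uniform homogeneity.
The last value `τ` makes the `f'(τ)` pairwise mutually exclusive, and the `*` makes `f'(τ)` extend
`f(β)(τ)` always and every `f(α)(τ)` comparable with both `f(β)(τ)` and `f(η)(τ)`; this gives the
ascent-path property and both claims on supports. A successor level adds no vanishing levels, so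
`V(T)` is unchanged.
-/

section Nodes

variable {ν a b c η i j ε v : Ordinal} {s s' t t' x : PNode}

lemma ndom_mono (h : s ⊆ t) : ndom s ⊆ ndom t := fun _ ⟨v, hv⟩ => ⟨v, h hv⟩

lemma ndom_insert : ndom (insert (η, i) t) = insert η (ndom t) := by
  ext ε
  simp [ndom, exists_or]

lemma ndom_nrestrict : ndom (nrestrict t a) = ndom t ∩ Iio a := by
  ext ε
  simp [ndom, nrestrict]

lemma ndom_nstar : ndom (nstar s t) = ndom t := by
  ext ε
  constructor
  · rintro ⟨v, ⟨-, hε⟩ | ⟨hv, -⟩⟩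
    exacts [hε, ⟨v, hv⟩]
  · rintro ⟨v, hv⟩
    by_cases hs : ε ∈ ndom s
    · obtain ⟨w, hw⟩ := hs
      exact ⟨w, Or.inl ⟨hw, v, hv⟩⟩
    · exact ⟨v, Or.inr ⟨hv, hs⟩⟩

lemma ndom_sUnion (B : Set PNode) : ndom (⋃₀ B) = ⋃ x ∈ B, ndom x := by
  ext ε
  simp only [ndom, mem_ofPred_eq, mem_sUnion, mem_iUnion]
  exact ⟨fun ⟨v, x, hx, hv⟩ => ⟨x, hx, v, hv⟩, fun ⟨x, hx, v, hv⟩ => ⟨v, x, hx, hv⟩⟩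

lemma Iio_add_one_eq_insert (η : Ordinal) : Iio (η + 1) = insert η (Iio η) := by
  rw [← Order.succ_eq_add_one, Order.Iio_succ_eq_insert]

lemma nrestrict_eq_self (h : ndom t ⊆ Iio a) : nrestrict t a = t :=
  Set.ext fun p => ⟨And.left, fun hp => ⟨hp, h ⟨p.2, hp⟩⟩⟩

lemma nrestrict_insert_of_le (ha : a ≤ η) : nrestrict (insert (η, i) t) a = nrestrict t a := by
  ext ⟨ε, v⟩
  simp only [nrestrict, mem_ofPred_eq, mem_insert_iff, Prod.mk.injEq, or_and_right,
    or_iff_right_iff_imp, and_imp]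
  rintro rfl - hε
  exact absurd (hε.trans_le ha) (lt_irrefl ε)

lemma nstar_eq_nrestrict (ht : ndom t = Iio b) (hts : ndom t ⊆ ndom s) :
    nstar s t = nrestrict s b := by
  ext p
  constructor
  · rintro (⟨hp, hd⟩ | ⟨hp, hd⟩)
    · exact ⟨hp, show p.1 ∈ Iio b from ht ▸ hd⟩
    · exact absurd (hts ⟨p.2, hp⟩) hd
  · rintro ⟨hp, hb⟩
    exact Or.inl ⟨hp, show p.1 ∈ ndom t from ht ▸ hb⟩

lemma nstar_insert (hs : η ∉ ndom s) :
    nstar s (insert (η, i) t) = insert (η, i) (nstar s t) := by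
  ext ⟨ε, v⟩
  simp only [nstar, ndom_insert, mem_union, mem_ofPred_eq, mem_insert_iff, Prod.mk.injEq]
  constructor
  · rintro (⟨hv, rfl | hε⟩ | ⟨⟨rfl, rfl⟩ | hv, hε⟩)
    · exact absurd ⟨v, hv⟩ hs
    · exact Or.inr (Or.inl ⟨hv, hε⟩)
    · exact Or.inl ⟨rfl, rfl⟩
    · exact Or.inr (Or.inr ⟨hv, hε⟩)
  · rintro (⟨rfl, rfl⟩ | ⟨hv, hε⟩ | ⟨hv, hε⟩)
    · exact Or.inr ⟨Or.inl ⟨rfl, rfl⟩, hs⟩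
    · exact Or.inl ⟨hv, Or.inr hε⟩
    · exact Or.inr ⟨Or.inr hv, hε⟩

lemma nstar_nrestrict_self (t : PNode) (b : Ordinal) : nstar (nrestrict t b) t = t := by
  ext p
  constructor
  · rintro (⟨⟨hp, -⟩, -⟩ | ⟨hp, -⟩) <;> exact hp
  · intro hp
    by_cases hb : p.1 < b
    · exact Or.inl ⟨⟨hp, hb⟩, p.2, hp⟩
    · exact Or.inr ⟨hp, fun ⟨_, _, h⟩ => hb h⟩

lemma subset_nstar_self (h : ndom s ⊆ ndom t) : s ⊆ nstar s t :=
  fun p hp => Or.inl ⟨hp, h ⟨p.2, hp⟩⟩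

lemma IsNodeOf.ndom_eq (h : IsNodeOf ν a s) : ndom s = Iio a := by
  ext ε
  exact ⟨fun ⟨v, hv⟩ => (h.1 _ hv).1, fun hε => (h.2 ε hε).exists⟩

lemma IsNodeOf.eq_of_mem {w : Ordinal} (h : IsNodeOf ν a s) (hv : (ε, v) ∈ s)
    (hw : (ε, w) ∈ s) : v = w :=
  (h.2 ε (h.1 _ hv).1).unique hv hw

lemma IsNodeOf.subset_of_ndom_subset (hs : IsNodeOf ν a s) (hdom : ndom s ⊆ ndom t)
    (h : s ⊆ t ∨ t ⊆ s) : s ⊆ t := by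
  rcases h with h | h
  · exact h
  · rintro ⟨ε, v⟩ hv
    obtain ⟨w, hw⟩ := hdom ⟨v, hv⟩
    rwa [hs.eq_of_mem hv (h hw)]

lemma IsNodeOf.subset_nstar (hx : IsNodeOf ν a x) (hxt : x ⊆ t) (hxs : x ⊆ s ∨ s ⊆ x) :
    x ⊆ nstar s t := by
  rintro ⟨ε, v⟩ hv
  by_cases hε : ε ∈ ndom s
  · refine Or.inl ⟨?_, v, hxt hv⟩
    rcases hxs with hxs | hxs
    · exact hxs hv
    · obtain ⟨w, hw⟩ := hε
      rwa [hx.eq_of_mem hv (hxs hw)]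
  · exact Or.inr ⟨hxt hv, hε⟩

lemma IsNodeOf.insert (h : IsNodeOf ν η t) (hi : i < ν) :
    IsNodeOf ν (η + 1) (insert (η, i) t) := by
  refine ⟨?_, fun ε hε => ?_⟩
  · rintro p (rfl | hp)
    · exact ⟨lt_add_one _, hi⟩
    · exact ⟨(h.1 p hp).1.trans (lt_add_one _), (h.1 p hp).2⟩
  have hη : η ∉ ndom t := by rw [h.ndom_eq]; exact lt_irrefl η
  rcases (Order.lt_add_one_iff.1 hε).lt_or_eq with hε | rfl
  · obtain ⟨v, hv, huniq⟩ := h.2 ε hε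
    refine ⟨v, mem_insert_of_mem _ hv, fun w hw => ?_⟩
    rcases hw with hw | hw
    · exact absurd (hε.trans_eq (Prod.mk.inj hw).1.symm) (lt_irrefl ε)
    · exact huniq w hw
  · refine ⟨i, mem_insert _ _, fun w hw => ?_⟩
    rcases hw with hw | hw
    · exact (Prod.mk.inj hw).2
    · exact absurd ⟨w, hw⟩ hη

lemma mutExc_of_ndom_eq_empty (h : ndom s = ∅) : MutExc s t :=
  fun _ v _ hv _ => (h.subset ⟨v, hv⟩).elim

lemma MutExc.nstar (hs : MutExc s s') (ht : MutExc t t') (hd : ndom s = ndom s') :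
    MutExc (nstar s t) (nstar s' t') := by
  rintro ε v w (⟨hv, -⟩ | ⟨hv, hvs⟩) (⟨hw, -⟩ | ⟨hw, hws⟩)
  · exact hs ε v w hv hw
  · exact absurd (hd ▸ ⟨v, hv⟩) hws
  · exact absurd (hd ▸ ⟨w, hw⟩) hvs
  · exact ht ε v w hv hw

lemma MutExc.insert (h : MutExc s t) (hij : i ≠ j) (hs : η ∉ ndom s) (ht : η ∉ ndom t) :
    MutExc (insert (η, i) s) (insert (η, j) t) := by
  rintro ε v w (hv | hv) (hw | hw)
  · rw [(Prod.mk.inj hv).2, (Prod.mk.inj hw).2]; exact hij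
  · exact absurd ⟨w, (Prod.mk.inj hv).1 ▸ hw⟩ ht
  · exact absurd ⟨v, (Prod.mk.inj hw).1 ▸ hv⟩ hs
  · exact h ε v w hv hw

lemma mem_insert_iff_of_notMem_ndom (ht : η ∉ ndom t) : (η, i) ∈ insert (η, j) t ↔ i = j :=
  ⟨fun h => h.elim (fun h => (Prod.mk.inj h).2) fun h => absurd ⟨i, h⟩ ht, fun h => h ▸ mem_insert _ _⟩

lemma not_eqStar_insert (ht : ndom t = Iio η) (hij : i ≠ j) :
    ¬ EqStar (insert (η, i) t) (insert (η, j) t) := by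
  rintro ⟨-, α, hα, hfin⟩
  rw [ndom_insert, ht, ← Iio_add_one_eq_insert] at hα
  have hη : η ∉ ndom t := ht ▸ lt_irrefl η
  exact hij ((mem_insert_iff_of_notMem_ndom hη).1
    ((hfin η (Order.lt_add_one_iff.1 hα) i).1 (mem_insert _ _)))

end Nodes

section Filter

open Filter

/-- The filter `F` of the paper. -/
def seqFilter (ζ : Ordinal) (X : Ordinal → Set Ordinal) : Filter Ordinal :=
  ⨅ ξ : Iio ζ, 𝓟 (X ξ)

variable {ζ : Ordinal} {X : Ordinal → Set Ordinal}

lemma compl_singleton_mem_seqFilter (hXint : (⋂ ξ ∈ Iio ζ, X ξ) = ∅) (i : Ordinal) :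
    {i}ᶜ ∈ seqFilter ζ X := by
  have : i ∉ ⋂ ξ ∈ Iio ζ, X ξ := hXint ▸ notMem_empty i
  obtain ⟨ξ, hξ, hi⟩ : ∃ ξ < ζ, i ∉ X ξ := by simpa using this
  exact mem_iInf_of_mem ⟨ξ, hξ⟩ (mem_principal.2 fun τ hτ (h : τ = i) => hi (h ▸ hτ))

lemma pos_of_iInter_eq_empty (hXint : (⋂ ξ ∈ Iio ζ, X ξ) = ∅) : 0 < ζ := by
  by_contra! h
  rw [nonpos_iff_eq_zero.1 h] at hXint
  simp at hXint

lemma Iio_mem_seqFilter {θo : Ordinal} (hXsub : ∀ ξ < ζ, X ξ ⊆ Iio θo)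
    (hXint : (⋂ ξ ∈ Iio ζ, X ξ) = ∅) : Iio θo ∈ seqFilter ζ X :=
  have hζ := pos_of_iInter_eq_empty hXint
  mem_iInf_of_mem ⟨0, hζ⟩ (mem_principal.2 (hXsub 0 hζ))

lemma inFX_eq_mem_seqFilter (hXdec : ∀ ξ ξ', ξ ≤ ξ' → ξ' < ζ → X ξ' ⊆ X ξ)
    (hXint : (⋂ ξ ∈ Iio ζ, X ξ) = ∅) : InFX ζ X = (· ∈ seqFilter ζ X) := by
  have : Nonempty (Iio ζ) := ⟨⟨0, pos_of_iInter_eq_empty hXint⟩⟩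
  have hdir : Directed (· ≥ ·) fun ξ : Iio ζ => 𝓟 (X ξ) := fun ξ ξ' =>
    have hmax : max ξ.1 ξ'.1 < ζ := max_lt ξ.2 ξ'.2
    ⟨⟨_, hmax⟩, principal_mono.2 (hXdec _ _ le_sup_left hmax),
      principal_mono.2 (hXdec _ _ le_sup_right hmax)⟩
  ext Y
  simp only [InFX, seqFilter, mem_iInf_of_directed hdir, mem_principal, Subtype.exists, mem_Iio,
    exists_prop]

end Filter

section Tree

variable {T : Set PNode} {η μ a : Ordinal} {x : PNode}

def nextLevel (T : Set PNode) (η μ : Ordinal) : Set PNode :=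
  image2 (fun t i => insert (η, i) t) (level T η) (Iio μ)

lemma ndom_of_mem_nextLevel (hx : x ∈ nextLevel T η μ) : ndom x = Iio (η + 1) := by
  obtain ⟨t, ht, i, -, rfl⟩ := hx
  rw [ndom_insert, ht.2, Iio_add_one_eq_insert]

lemma nextLevel_subset_level : nextLevel T η μ ⊆ level (T ∪ nextLevel T η μ) (η + 1) :=
  fun _ hx => ⟨Or.inr hx, ndom_of_mem_nextLevel hx⟩

lemma level_union_nextLevel_of_le (ha : a ≤ η) :
    level (T ∪ nextLevel T η μ) a = level T a := by
  ext x
  refine ⟨fun ⟨hx, hd⟩ => ⟨hx.resolve_right fun hN => ?_, hd⟩, fun ⟨hx, hd⟩ => ⟨Or.inl hx, hd⟩⟩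
  rw [ndom_of_mem_nextLevel hN, Iio_injective.eq_iff] at hd
  exact absurd (hd ▸ ha) (not_le.2 (lt_add_one _))

lemma level_union_nextLevel_self (hT : ∀ t ∈ T, ∃ c ≤ η, ndom t = Iio c) :
    level (T ∪ nextLevel T η μ) (η + 1) = nextLevel T η μ := by
  refine Subset.antisymm (fun x ⟨hx, hd⟩ => hx.resolve_left fun hxT => ?_) nextLevel_subset_level
  obtain ⟨c, hc, hxc⟩ := hT x hxT
  rw [hxc, Iio_injective.eq_iff] at hd
  exact absurd (hd ▸ hc) (not_le.2 (lt_add_one _))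

lemma IsStreamlined.union_nextLevel (hS : IsStreamlined T) :
    IsStreamlined (T ∪ nextLevel T η μ) := by
  rintro x (hx | hx) a
  · exact Or.inl (hS x hx a)
  rcases le_or_gt a η with ha | ha
  · obtain ⟨t, ht, i, -, rfl⟩ := hx
    rw [nrestrict_insert_of_le ha]
    exact Or.inl (hS t ht.1 a)
  · rw [nrestrict_eq_self (ndom_of_mem_nextLevel hx ▸ Iio_subset_Iio (Order.add_one_le_iff.2 ha))]
    exact Or.inr hx

lemma UnifHomog.union_nextLevel (hT : ∀ t ∈ T, ∃ c ≤ η, ndom t = Iio c)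
    (hS : IsStreamlined T) (hH : UnifHomog T) : UnifHomog (T ∪ nextLevel T η μ) := by
  have hN : ∀ x ∈ nextLevel T η μ, ndom x = Iio (η + 1) := fun _ => ndom_of_mem_nextLevel
  rintro s (hs | hs) t (ht | ht)
  · exact Or.inl (hH s hs t ht)
  · obtain ⟨t₀, ht₀, i, hi, rfl⟩ := ht
    obtain ⟨c, hc, hsc⟩ := hT s hs
    rw [nstar_insert (hsc ▸ (lt_irrefl η <| ·.trans_le hc))]
    exact Or.inr ⟨nstar s t₀, ⟨hH s hs t₀ ht₀.1, ndom_nstar.trans ht₀.2⟩, i, hi, rfl⟩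
  · obtain ⟨c, hc, htc⟩ := hT t ht
    rw [nstar_eq_nrestrict htc (htc ▸ hN s hs ▸ Iio_subset_Iio (hc.trans (lt_add_one _).le))]
    exact hS.union_nextLevel s (Or.inr hs) c
  · rw [nstar_eq_nrestrict (hN t ht) (hN t ht ▸ (hN s hs).ge), nrestrict_eq_self (hN s hs).le]
    exact Or.inr hs

lemma IsNormalOfHeight.union_nextLevel (hT : ∀ t ∈ T, ∃ c ≤ η, ndom t = Iio c)
    (hS : IsStreamlined T) (hnorm : IsNormalOfHeight T (η + 1)) (hμ : 0 < μ) :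
    IsNormalOfHeight (T ∪ nextLevel T η μ) (η + 1 + 1) := by
  have hext : ∀ y ∈ level T η, insert (η, 0) y ∈ level (T ∪ nextLevel T η μ) (η + 1) :=
    fun y hy => nextLevel_subset_level ⟨y, hy, 0, hμ, rfl⟩
  rintro x hx a ha
  rcases (Order.lt_add_one_iff.1 ha).lt_or_eq with ha | rfl
  · rw [level_union_nextLevel_of_le (Order.lt_add_one_iff.1 ha)]
    rcases hx with hx | ⟨t, ht, i, -, rfl⟩
    · exact hnorm x hx a ha
    · have ha' := Order.lt_add_one_iff.1 ha
      refine ⟨nrestrict t a, ⟨hS t ht.1 a, ?_⟩, Or.inr ?_⟩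
      · rw [ndom_nrestrict, ht.2, Iio_inter_Iio, min_eq_right ha']
      · rw [← nrestrict_insert_of_le ha']
        exact fun p hp => hp.1
  · rcases hx with hx | hx
    · obtain ⟨y, hy, hxy | hyx⟩ := hnorm x hx η (lt_add_one _)
      · exact ⟨_, hext y hy, Or.inl (hxy.trans (subset_insert _ _))⟩
      · obtain ⟨c, hc, hxc⟩ := hT x hx
        have hcη : c = η := le_antisymm hc <| by
          simpa [hy.2, hxc] using ndom_mono hyx
        exact ⟨_, hext x ⟨hx, hcη ▸ hxc⟩, Or.inl (subset_insert _ _)⟩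
    · exact ⟨x, nextLevel_subset_level hx, Or.inl subset_rfl⟩

lemma mk_nextLevel_le :
    Cardinal.mk (nextLevel T η μ) ≤ Cardinal.mk (level T η) * Cardinal.lift μ.card :=
  Cardinal.mk_Iio_ordinal μ ▸ Cardinal.mk_image2_le

lemma level_union_nextLevel_nonempty (hne : ∀ a ≤ η, (level T a).Nonempty) (hμ : 0 < μ)
    (ha : a ≤ η + 1) : (level (T ∪ nextLevel T η μ) a).Nonempty := by
  rcases ha.lt_or_eq with ha | rfl
  · rw [level_union_nextLevel_of_le (Order.lt_add_one_iff.1 ha)]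
    exact hne a (Order.lt_add_one_iff.1 ha)
  · obtain ⟨t, ht⟩ := hne η le_rfl
    exact ⟨_, nextLevel_subset_level ⟨t, ht, 0, hμ, rfl⟩⟩

lemma mk_level_union_nextLevel_lt {κ : Cardinal} (hT : ∀ t ∈ T, ∃ c ≤ η, ndom t = Iio c)
    (hκ : Cardinal.aleph0 ≤ κ) (hcard : ∀ a ≤ η, Cardinal.mk (level T a) < Cardinal.lift κ)
    (hμ : μ < κ.ord) (ha : a ≤ η + 1) :
    Cardinal.mk (level (T ∪ nextLevel T η μ) a) < Cardinal.lift κ := by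
  rcases ha.lt_or_eq with ha | rfl
  · rw [level_union_nextLevel_of_le (Order.lt_add_one_iff.1 ha)]
    exact hcard a (Order.lt_add_one_iff.1 ha)
  · rw [level_union_nextLevel_self hT]
    exact mk_nextLevel_le.trans_lt (Cardinal.mul_lt_of_lt (Cardinal.aleph0_le_lift.2 hκ)
      (hcard _ le_rfl) (Cardinal.lift_lt.2 (Cardinal.lt_ord.1 hμ)))

end Tree

section Vanishing

variable {T S B : Set PNode} {η a c : Ordinal}

lemma IsBranch.lt_of_mem (hB : IsBranch T a B) {y : PNode} (hy : y ∈ B) (hyc : ndom y = Iio c) :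
    c < a :=
  hB.2.2.subset ⟨y, hy, hyc⟩

lemma not_mem_VSet_of_level_eq_empty (h0 : (level T 0).Nonempty) (hca : c < a)
    (hc : level T c = ∅) : a ∉ VSet T := by
  rintro ⟨-, hV⟩
  obtain ⟨x, hxT, hx⟩ := h0
  obtain ⟨B, hB, -, -⟩ := hV x hxT ⟨0, pos_of_gt hca, hx⟩
  obtain ⟨y, hy, hyc⟩ := hB.2.2.symm.subset hca
  exact (hc ▸ ⟨hB.1 hy, hyc⟩ : y ∈ (∅ : Set PNode))

/-- Below `η` the branches of both trees are the same; above `η + 1` neither tree has branches. -/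
lemma VSet_union_eq (hT : ∀ t ∈ T, ∃ c ≤ η, ndom t = Iio c)
    (hS : ∀ s ∈ S, ndom s = Iio (η + 1)) (h0 : (level T 0).Nonempty) :
    VSet (T ∪ S) = VSet T := by
  have hη : η < η + 1 := lt_add_one _
  ext a
  rcases le_or_gt a η with ha | ha
  · constructor
    · rintro ⟨hlim, hV⟩
      refine ⟨hlim, fun x hx hxd => ?_⟩
      obtain ⟨B, hB, hxB, hU⟩ := hV x (Or.inl hx) hxd
      have hBT : B ⊆ T := fun y hy => (hB.1 hy).resolve_right fun hyS =>
        absurd ((hB.lt_of_mem hy (hS y hyS)).trans_le ha) (not_lt.2 hη.le)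
      exact ⟨B, ⟨hBT, hB.2⟩, hxB, fun h => hU (Or.inl h)⟩
    · rintro ⟨hlim, hV⟩
      refine ⟨hlim, fun x hx ⟨b, hb, hxb⟩ => ?_⟩
      have hxT : x ∈ T := hx.resolve_right fun hxS => by
        rw [hS x hxS, Iio_injective.eq_iff] at hxb
        exact absurd (hxb ▸ hb.trans_le ha) (not_lt.2 hη.le)
      obtain ⟨B, hB, hxB, hU⟩ := hV x hxT ⟨b, hb, hxb⟩
      refine ⟨B, ⟨hB.1.trans subset_union_left, hB.2⟩, hxB, ?_⟩
      rintro (hUT | hUS)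
      · exact hU hUT
      · have hmem : η ∈ ndom (⋃₀ B) := (hS _ hUS).symm ▸ hη
        rw [ndom_sUnion, mem_iUnion₂] at hmem
        obtain ⟨y, hy, hηy⟩ := hmem
        obtain ⟨c, -, hyc⟩ := hT y (hB.1 hy)
        rw [hyc] at hηy
        exact absurd ((hB.lt_of_mem hy hyc).trans_le ha) (not_lt.2 hηy.le)
  · have hlevel : ∀ T' : Set PNode, (∀ t ∈ T', ∃ c ≤ η + 1, ndom t = Iio c) →
        level T' (η + 1 + 1) = ∅ := fun T' hT' => eq_empty_of_forall_notMem fun t ⟨ht, htd⟩ => by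
      obtain ⟨c, hc, htc⟩ := hT' t ht
      rw [htc, Iio_injective.eq_iff] at htd
      exact absurd (htd ▸ hc) (not_le.2 (lt_add_one _))
    have hnot : ∀ T' : Set PNode, (level T' 0).Nonempty →
        (∀ t ∈ T', ∃ c ≤ η + 1, ndom t = Iio c) → a ∉ VSet T' := fun T' h0' hT' h =>
      not_mem_VSet_of_level_eq_empty h0' (h.1.add_one_lt (h.1.add_one_lt ha)) (hlevel T' hT') h
    refine iff_of_false (hnot (T ∪ S) ?_ ?_) (hnot T h0 fun t ht => ?_)
    · exact h0.mono fun _ hx => ⟨Or.inl hx.1, hx.2⟩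
    · rintro t (ht | ht)
      · obtain ⟨c, hc, htc⟩ := hT t ht
        exact ⟨c, hc.trans hη.le, htc⟩
      · exact ⟨η + 1, le_rfl, hS t ht⟩
    · obtain ⟨c, hc, htc⟩ := hT t ht
      exact ⟨c, hc.trans hη.le, htc⟩

end Vanishing

section Path

variable {T : Set PNode} {f : Ordinal → Ordinal → PNode} {θo κo β η μ γ a c τ τ' : Ordinal}
  {F : Filter Ordinal} {InF : Set Ordinal → Prop}

def extendPath (f : Ordinal → Ordinal → PNode) (β η : Ordinal) : Ordinal → Ordinal → PNode :=
  Function.update f (η + 1) fun τ => insert (η, τ) (nstar (f β τ) (f η τ))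

lemma extendPath_of_le (ha : a ≤ η) : extendPath f β η a = f a :=
  Function.update_of_ne (Order.lt_add_one_iff.2 ha).ne _ _

lemma extendPath_add_one :
    extendPath f β η (η + 1) τ = insert (η, τ) (nstar (f β τ) (f η τ)) := by
  rw [extendPath, Function.update_self]

lemma subset_extendPath_add_one (hfa : IsNodeOf κo a (f a τ)) (hdom : ndom (f a τ) ⊆ ndom (f η τ))
    (hβ : f a τ ⊆ f β τ ∨ f β τ ⊆ f a τ) (hη : f a τ ⊆ f η τ ∨ f η τ ⊆ f a τ) :
    f a τ ⊆ extendPath f β η (η + 1) τ := by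
  rw [extendPath_add_one]
  exact (hfa.subset_nstar (hfa.subset_of_ndom_subset hdom hη) hβ).trans (subset_insert _ _)

lemma supp_self (g : Ordinal → PNode) : supp θo g g = Iio θo :=
  Set.ext fun _ => ⟨And.left, fun hτ => ⟨hτ, Or.inl subset_rfl⟩⟩

lemma supp_comm (g h : Ordinal → PNode) : supp θo g h = supp θo h g :=
  Set.ext fun _ => and_congr_right fun _ => or_comm

lemma MEAscentPath.supp_mem (hθF : Iio θo ∈ F) (hf : MEAscentPath θo (· ∈ F) T γ f)
    (ha : a < γ) (hc : c < γ) : supp θo (f a) (f c) ∈ F := by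
  rcases lt_trichotomy a c with h | rfl | h
  · exact hf.2.1 a c h hc
  · rwa [supp_self]
  · rw [supp_comm]
    exact hf.2.1 c a h ha

lemma MEAscentPath.mutExc (hf : MEAscentPath θo InF T γ f) (ha : a < γ) (hτ : τ < θo)
    (hτ' : τ' < θo) (hne : τ ≠ τ') : MutExc (f a τ) (f a τ') := by
  rcases eq_zero_or_pos a with rfl | ha0
  · exact mutExc_of_ndom_eq_empty ((hf.1 0 ha τ hτ).2.trans Iio_zero_eq_empty)
  · exact hf.2.2 a ha0 ha τ τ' hτ hτ' hne

lemma extendPath_add_one_mem_nextLevel (hf : MEAscentPath θo InF T (η + 1) f) (hH : UnifHomog T)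
    (hβ : β ≤ η) (hτ : τ < θo) (hθμ : θo ≤ μ) :
    extendPath f β η (η + 1) τ ∈ nextLevel T η μ := by
  have hfβ := hf.1 β (Order.lt_add_one_iff.2 hβ) τ hτ
  have hfη := hf.1 η (lt_add_one _) τ hτ
  exact ⟨_, ⟨hH _ hfβ.1 _ hfη.1, ndom_nstar.trans hfη.2⟩, τ, hτ.trans_le hθμ,
    extendPath_add_one.symm⟩

lemma supp_extendPath_add_one_mem (hθF : Iio θo ∈ F) (hf : MEAscentPath θo (· ∈ F) T (η + 1) f)
    (hfn : ∀ a ≤ η, ∀ τ < θo, IsNodeOf κo a (f a τ)) (hβ : β ≤ η) (ha : a ≤ η) :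
    supp θo (f a) (extendPath f β η (η + 1)) ∈ F := by
  have hlt : ∀ {c}, c ≤ η → c < η + 1 := Order.lt_add_one_iff.2
  refine Filter.mem_of_superset (Filter.inter_mem (hf.supp_mem hθF (hlt ha) (hlt hβ))
    (hf.supp_mem hθF (hlt ha) (hlt le_rfl))) fun τ ⟨⟨hτ, hcβ⟩, _, hcη⟩ => ⟨hτ, Or.inl ?_⟩
  refine subset_extendPath_add_one (hfn a ha τ hτ) ?_ hcβ hcη
  rw [(hf.1 a (hlt ha) τ hτ).2, (hf.1 η (hlt le_rfl) τ hτ).2]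
  exact Iio_subset_Iio ha

lemma mutExc_extendPath_add_one (hf : MEAscentPath θo InF T (η + 1) f) (hβ : β ≤ η)
    (hτ : τ < θo) (hτ' : τ' < θo) (hne : τ ≠ τ') :
    MutExc (extendPath f β η (η + 1) τ) (extendPath f β η (η + 1) τ') := by
  have hlt : ∀ {c}, c ≤ η → c < η + 1 := Order.lt_add_one_iff.2
  have hη : ∀ {σ}, σ < θo → η ∉ ndom (nstar (f β σ) (f η σ)) := fun hσ => by
    rw [ndom_nstar, (hf.1 η (hlt le_rfl) _ hσ).2]
    exact lt_irrefl η
  rw [extendPath_add_one, extendPath_add_one]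
  refine MutExc.insert (MutExc.nstar (hf.mutExc (hlt hβ) hτ hτ' hne)
    (hf.mutExc (hlt le_rfl) hτ hτ' hne) ?_) hne (hη hτ) (hη hτ')
  rw [(hf.1 β (hlt hβ) τ hτ).2, (hf.1 β (hlt hβ) τ' hτ').2]

lemma MEAscentPath.extendPath (hθF : Iio θo ∈ F) (hf : MEAscentPath θo (· ∈ F) T (η + 1) f)
    (hfn : ∀ a ≤ η, ∀ τ < θo, IsNodeOf κo a (f a τ)) (hH : UnifHomog T) (hβ : β ≤ η)
    (hθμ : θo ≤ μ) :
    MEAscentPath θo (· ∈ F) (T ∪ nextLevel T η μ) (η + 1 + 1) (extendPath f β η) := by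
  refine ⟨fun a ha τ hτ => ?_, fun a b hab hb => ?_, fun a ha0 ha τ τ' hτ hτ' hne => ?_⟩
  · rcases (Order.lt_add_one_iff.1 ha).lt_or_eq with ha | rfl
    · rw [extendPath_of_le (Order.lt_add_one_iff.1 ha),
        level_union_nextLevel_of_le (Order.lt_add_one_iff.1 ha)]
      exact hf.1 a ha τ hτ
    · exact nextLevel_subset_level (extendPath_add_one_mem_nextLevel hf hH hβ hτ hθμ)
  · have ha := Order.lt_add_one_iff.1 (hab.trans_le (Order.lt_add_one_iff.1 hb))
    rw [extendPath_of_le ha]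
    rcases (Order.lt_add_one_iff.1 hb).lt_or_eq with hb | rfl
    · rw [extendPath_of_le (Order.lt_add_one_iff.1 hb)]
      exact hf.2.1 a b hab hb
    · exact supp_extendPath_add_one_mem hθF hf hfn hβ ha
  · rcases (Order.lt_add_one_iff.1 ha).lt_or_eq with ha | rfl
    · rw [extendPath_of_le (Order.lt_add_one_iff.1 ha)]
      exact hf.2.2 a ha0 ha τ τ' hτ hτ' hne
    · exact mutExc_extendPath_add_one hf hβ hτ hτ' hne

lemma mutExc_extendPath_add_one_mem (hcofin : ∀ i, {i}ᶜ ∈ F)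
    (hf : MEAscentPath θo (· ∈ F) T (η + 1) f) (hS : IsStreamlined T)
    (hmut : ∀ a ≤ η, ∀ t ∈ level T a, {τ | τ < θo ∧ MutExc t (f a τ)} ∈ F) (hβ : β ≤ η)
    {x : PNode} (hx : x ∈ nextLevel T η μ) :
    {τ | τ < θo ∧ MutExc x (extendPath f β η (η + 1) τ)} ∈ F := by
  obtain ⟨t, ht, i, -, rfl⟩ := hx
  have htβ : nrestrict t β ∈ level T β :=
    ⟨hS t ht.1 β, by rw [ndom_nrestrict, ht.2, Iio_inter_Iio, min_eq_right hβ]⟩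
  refine Filter.mem_of_superset (Filter.inter_mem (Filter.inter_mem (hmut β hβ _ htβ)
    (hmut η le_rfl t ht)) (hcofin i)) fun τ ⟨⟨⟨hτ, hmβ⟩, _, hmη⟩, hτi⟩ => ⟨hτ, ?_⟩
  have hfβ := hf.1 β (Order.lt_add_one_iff.2 hβ) τ hτ
  have hfη := hf.1 η (lt_add_one _) τ hτ
  -- comparing `t = (t ↾ β) * t` with `f β τ * f η τ` piecewise
  rw [extendPath_add_one, ← nstar_nrestrict_self t β]
  refine MutExc.insert (hmβ.nstar hmη (htβ.2.trans hfβ.2.symm)) (Ne.symm hτi) ?_ ?_ <;>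
    simp only [ndom_nstar, ht.2, hfη.2, mem_Iio, lt_irrefl, not_false_eq_true]

end Path

section Condition

variable {κ : Cardinal} {θo β μ a τ : Ordinal} {InF : Set Ordinal → Prop} {F : Filter Ordinal}
  {p : SCond} {T : Set PNode} {t : PNode} {f : Ordinal → Ordinal → PNode} {η κo : Ordinal}

def SCond.oneStepExt (p : SCond) (β μ : Ordinal) : SCond where
  T := p.T ∪ nextLevel p.T p.η μ
  f := extendPath p.f β p.η
  η := p.η + 1

namespace IsSCondX

lemma ndom_eq_Iio (hp : IsSCondX κ θo InF p) (ht : t ∈ p.T) : ∃ c ≤ p.η, ndom t = Iio c :=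
  (hp.1 t ht).imp fun _ hc => ⟨hc.1, hc.2.ndom_eq⟩

lemma isNodeOf_of_mem_level (hp : IsSCondX κ θo InF p) (ht : t ∈ level p.T a) :
    IsNodeOf κ.ord a t := by
  obtain ⟨c, -, hc⟩ := hp.1 t ht.1
  rwa [Iio_injective (hc.ndom_eq.symm.trans ht.2)] at hc

lemma isNodeOf_f (hp : IsSCondX κ θo InF p) (ha : a ≤ p.η) (hτ : τ < θo) :
    IsNodeOf κ.ord a (p.f a τ) :=
  hp.isNodeOf_of_mem_level (hp.2.2.2.2.2.2.1.1 a (Order.lt_add_one_iff.2 ha) τ hτ)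

lemma mutExc_mem (hθF : Iio θo ∈ F) (hp : IsSCondX κ θo (· ∈ F) p) (ha : a ≤ p.η)
    (ht : t ∈ level p.T a) : {τ | τ < θo ∧ MutExc t (p.f a τ)} ∈ F := by
  rcases eq_zero_or_pos a with rfl | ha0
  · exact Filter.mem_of_superset hθF fun τ hτ =>
      ⟨hτ, mutExc_of_ndom_eq_empty (ht.2.trans Iio_zero_eq_empty)⟩
  · exact hp.2.2.2.2.2.2.2.2.2 a ha0 ha t ht

theorem oneStepExt (hκ : Cardinal.aleph0 ≤ κ) (hθF : Iio θo ∈ F) (hcofin : ∀ i, {i}ᶜ ∈ F)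
    (hp : IsSCondX κ θo (· ∈ F) p) (hβ : β ≤ p.η) (hθμ : θo ≤ μ) (hμ0 : 0 < μ)
    (hμκ : μ < κ.ord) : IsSCondX κ θo (· ∈ F) (p.oneStepExt β μ) := by
  have hdom : ∀ t ∈ p.T, ∃ c ≤ p.η, ndom t = Iio c := fun _ => hp.ndom_eq_Iio
  have hfn : ∀ a ≤ p.η, ∀ τ < θo, IsNodeOf κ.ord a (p.f a τ) := fun _ ha _ => hp.isNodeOf_f ha
  have hmut : ∀ a ≤ p.η, ∀ t ∈ level p.T a, {τ | τ < θo ∧ MutExc t (p.f a τ)} ∈ F :=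
    fun _ ha _ => hp.mutExc_mem hθF ha
  have hnodeTop : ∀ t ∈ level p.T p.η, IsNodeOf κ.ord p.η t := fun _ => hp.isNodeOf_of_mem_level
  obtain ⟨hnode, hS, hH, hnorm, hne, hcard, hf, hV, -, -⟩ := hp
  have hlevel : ∀ {a}, a < p.η + 1 → level (p.oneStepExt β μ).T a = level p.T a :=
    fun ha => level_union_nextLevel_of_le (Order.lt_add_one_iff.1 ha)
  have htop : level (p.oneStepExt β μ).T (p.oneStepExt β μ).η = nextLevel p.T p.η μ :=
    level_union_nextLevel_self hdom
  refine ⟨?_, hS.union_nextLevel, hH.union_nextLevel hdom hS, hnorm.union_nextLevel hdom hS hμ0,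
    fun _ => level_union_nextLevel_nonempty hne hμ0,
    fun _ => mk_level_union_nextLevel_lt hdom hκ hcard hμκ, hf.extendPath hθF hfn hH hβ hθμ,
    ?_, fun h => (Order.not_isSuccLimit_succ p.η (Order.succ_eq_add_one p.η ▸ h)).elim,
    fun a ha0 ha t ht => ?_⟩
  · rintro t (ht | ⟨t₀, ht₀, i, hi, rfl⟩)
    · obtain ⟨c, hc, htc⟩ := hnode t ht
      exact ⟨c, hc.trans le_self_add, htc⟩
    · exact ⟨_, le_rfl, (hnodeTop t₀ ht₀).insert (hi.trans hμκ)⟩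
  · show OrdClosed (VSet (p.T ∪ nextLevel p.T p.η μ))
    rwa [VSet_union_eq hdom (fun _ => ndom_of_mem_nextLevel) (hne 0 (zero_le (a := p.η)))]
  · rcases ha.lt_or_eq with ha | rfl
    · rw [hlevel ha] at ht
      show {τ | τ < θo ∧ MutExc t (extendPath p.f β p.η a τ)} ∈ F
      rw [extendPath_of_le (Order.lt_add_one_iff.1 ha)]
      exact hmut a (Order.lt_add_one_iff.1 ha) t ht
    · rw [htop] at ht
      exact mutExc_extendPath_add_one_mem hcofin hf hS hmut hβ ht

lemma sext_oneStepExt (hp : IsSCondX κ θo InF p) : sext θo (p.oneStepExt β μ) p := by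
  refine ⟨le_self_add, fun t => ⟨fun ht => ⟨Or.inl ht, hp.ndom_eq_Iio ht⟩, ?_⟩,
    fun a ha τ _ => congrFun (extendPath_of_le ha) τ⟩
  rintro ⟨ht | ht, c, hc, htc⟩
  · exact ht
  · rw [ndom_of_mem_nextLevel ht, Iio_injective.eq_iff] at htc
    exact absurd (htc ▸ hc) (not_le.2 (lt_add_one _))

end IsSCondX

lemma supp_subset_supp_extendPath (hfη : ∀ τ < θo, IsNodeOf κo η (f η τ)) :
    supp θo (f β) (f η) ⊆ supp θo (f η) (extendPath f β η (η + 1)) := fun τ ⟨hτ, hc⟩ =>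
  ⟨hτ, Or.inl (subset_extendPath_add_one (hfη τ hτ) subset_rfl hc.symm (Or.inl subset_rfl))⟩

lemma supp_extendPath_add_one_eq (hfβ : ∀ τ < θo, ndom (f β τ) ⊆ ndom (f η τ)) :
    supp θo (f β) (extendPath f β η (η + 1)) = Iio θo :=
  Set.ext fun τ => ⟨And.left, fun hτ => ⟨hτ, Or.inl <| extendPath_add_one ▸
    (subset_nstar_self (hfβ τ hτ)).trans (subset_insert _ _)⟩⟩

lemma exists_pairwise_not_eqStar_subset_nextLevel {ν : Ordinal} (ht : t ∈ level T η)
    (hνμ : ν ≤ μ) : ∃ W ⊆ nextLevel T η μ, W.Pairwise (fun s t => ¬ EqStar s t) ∧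
      Cardinal.lift ν.card ≤ Cardinal.mk W := by
  have hη : η ∉ ndom t := ht.2 ▸ lt_irrefl η
  have hinj : InjOn (fun i => insert (η, i) t) (Iio ν) :=
    fun i _ j _ (h : insert (η, i) t = insert (η, j) t) =>
      (mem_insert_iff_of_notMem_ndom hη).1 (h ▸ mem_insert _ _)
  refine ⟨_, image_subset_iff.2 fun i (hi : i < ν) => ⟨t, ht, i, hi.trans_le hνμ, rfl⟩, ?_,
    ((Cardinal.mk_image_eq_of_injOn _ _ hinj).trans (Cardinal.mk_Iio_ordinal ν)).ge⟩
  rintro _ ⟨i, -, rfl⟩ _ ⟨j, -, rfl⟩ hne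
  exact not_eqStar_insert ht.2 fun hij => hne (hij ▸ rfl)

end Condition

theorem statement2_general
    (θ κ : Cardinal) (hθreg : θ.IsRegular) (hκreg : κ.IsRegular) (hθκ : θ < κ)
    (ζ : Ordinal) (X : Ordinal → Set Ordinal)
    (hXsub : ∀ ξ, ξ < ζ → X ξ ⊆ Set.Iio θ.ord)
    (hXdec : ∀ ξ ξ', ξ ≤ ξ' → ξ' < ζ → X ξ' ⊆ X ξ)
    (hXint : (⋂ ξ ∈ Set.Iio ζ, X ξ) = ∅)
    (p : SCond) (hp : IsSCondX κ θ.ord (InFX ζ X) p)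
    (β : Ordinal) (hβ : β ≤ p.η) (ν : Cardinal) (hν : ν < κ) :
    ∃ q : SCond, IsSCondX κ θ.ord (InFX ζ X) q ∧ sext θ.ord q p ∧
      q.η = p.η + 1 ∧
      (∃ W : Set PNode, W ⊆ level q.T q.η ∧ (W.Pairwise fun s t => ¬ EqStar s t) ∧
        Cardinal.lift.{1} ν ≤ Cardinal.mk ↥W) ∧
      supp θ.ord (p.f β) (p.f p.η) ⊆ supp θ.ord (p.f p.η) (q.f q.η) ∧
      supp θ.ord (p.f β) (q.f q.η) = Set.Iio θ.ord := by
  rw [inFX_eq_mem_seqFilter hXdec hXint] at hp ⊢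
  set μ := (ν ⊔ θ).ord
  have hμ0 : 0 < μ := Cardinal.ord_pos.2
    (Cardinal.aleph0_pos.trans_le (hθreg.aleph0_le.trans le_sup_right))
  have hfn : ∀ a ≤ p.η, ∀ τ < θ.ord, IsNodeOf κ.ord a (p.f a τ) := fun _ ha _ hτ =>
    hp.isNodeOf_f ha hτ
  obtain ⟨t, ht⟩ := hp.2.2.2.2.1 p.η le_rfl
  obtain ⟨W, hWN, hW, hWcard⟩ :=
    exists_pairwise_not_eqStar_subset_nextLevel ht (Cardinal.ord_le_ord.2 le_sup_left)
  refine ⟨p.oneStepExt β μ,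
    hp.oneStepExt hκreg.aleph0_le (Iio_mem_seqFilter hXsub hXint)
      (compl_singleton_mem_seqFilter hXint) hβ (Cardinal.ord_le_ord.2 le_sup_right) hμ0
      (Cardinal.ord_lt_ord.2 (max_lt hν hθκ)),
    hp.sext_oneStepExt, rfl, ⟨W, hWN.trans nextLevel_subset_level, hW, by simpa using hWcard⟩,
    supp_subset_supp_extendPath (hfn _ le_rfl), supp_extendPath_add_one_eq fun τ hτ => ?_⟩
  rw [(hfn β hβ τ hτ).ndom_eq, (hfn _ le_rfl τ hτ).ndom_eq]
  exact Iio_subset_Iio hβ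

/-- Statement 2 (One-step β-extension), Lemma 3.4 of the paper. -/
theorem statement2
    (θ κ : Cardinal) (hθreg : θ.IsRegular) (hκreg : κ.IsRegular) (hθκ : θ < κ)
    (hpow : ∀ lam : Cardinal, lam < κ → lam ^ θ < κ)
    (ζ : Ordinal) (X : Ordinal → Set Ordinal)
    (hXne : ∀ ξ, ξ < ζ → (X ξ).Nonempty)
    (hXsub : ∀ ξ, ξ < ζ → X ξ ⊆ Set.Iio θ.ord)
    (hXdec : ∀ ξ ξ', ξ ≤ ξ' → ξ' < ζ → X ξ' ⊆ X ξ)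
    (hXco : Cardinal.mk ↥(Set.Iio θ.ord \ X 0) = Cardinal.lift.{1} θ)
    (hXint : (⋂ ξ ∈ Set.Iio ζ, X ξ) = ∅)
    (p : SCond) (hp : IsSCondX κ θ.ord (InFX ζ X) p)
    (β : Ordinal) (hβ : β ≤ p.η) (ν : Cardinal) (hν : ν < κ) :
    ∃ q : SCond, IsSCondX κ θ.ord (InFX ζ X) q ∧ sext θ.ord q p ∧
      q.η = p.η + 1 ∧
      (∃ W : Set PNode, W ⊆ level q.T q.η ∧ (W.Pairwise fun s t => ¬ EqStar s t) ∧
        Cardinal.lift.{1} ν ≤ Cardinal.mk ↥W) ∧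
      supp θ.ord (p.f β) (p.f p.η) ⊆ supp θ.ord (p.f p.η) (q.f q.η) ∧
      supp θ.ord (p.f β) (q.f q.η) = Set.Iio θ.ord :=
  statement2_general θ κ hθreg hκreg hθκ ζ X hXsub hXdec hXint p hp β hβ ν hν
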